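/- Let G = (V,E) be a complete undirected graph on n nodes with root r ∈ V and metric edge costs {c_e}. Let B be an integer with 1 ≤ B ≤ n, and let O* be the minimum total cost of a finite collection of r-rooted paths whose union spans at least B nodes. Then there exist rooted trees T_1, T_2 (subtrees of G containing r) and reals a, b ≥ 0 with a + b = 1 such that a·c(T_1) + b·c(T_2) ≤ O* and a·|V(T_1)| + b·|V(T_2)| = B (the case T_1 = T_2 corresponds to a single rooted tree Q with c(Q) ≤ O* and |V(Q)| = B). -/

import Mathlib

open Finset

/-- `c` is a (semi-)metric cost function. -/
def IsMetricCost {V : Type*} (c : V → V → ℝ) : Prop :=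
  (∀ u, c u u = 0) ∧ (∀ u v, 0 ≤ c u v) ∧ (∀ u v, c u v = c v u) ∧
    ∀ u v x, c u x ≤ c u v + c v x

/-- Cost of a walk (a list of vertices). -/
def walkCost {V : Type*} (c : V → V → ℝ) : List V → ℝ
  | [] => 0
  | [_] => 0
  | a :: b :: l => c a b + walkCost c (b :: l)

/-- A rooted tree: a tree in the complete graph on `V` containing the root `r`. -/
structure RTree (V : Type*) (r : V) where
  verts : Finset V
  root_mem : r ∈ verts
  parent : V → V
  parent_mem : ∀ v ∈ verts, parent v ∈ verts
  reaches : ∀ v ∈ verts, ∃ m : ℕ, parent^[m] v = r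

/-- Total edge cost of a rooted tree. -/
noncomputable def treeCost {V : Type*} [DecidableEq V] {r : V}
    (c : V → V → ℝ) (T : RTree V r) : ℝ :=
  ∑ v ∈ T.verts.erase r, c (T.parent v) v

/-- The union of the vertex sets of a collection of walks. -/
def unionVerts {V : Type*} [DecidableEq V] (𝒞 : List (List V)) : Finset V :=
  𝒞.foldr (fun P s => P.toFinset ∪ s) ∅

/-!
Growing a tree along the given walks, adding the far end of every edge that leaves the current
tree as a new leaf, yields a rooted tree of cost at most `O*` that spans every vertex the walks
visit, hence at least `B` vertices. If it has `k > B` vertices, mixing it with weight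
`(B - 1) / (k - 1)` with the one-vertex tree `{r}` (cost `0`) gives a bipoint tree of cost at most
`O*` with exactly `B` vertices.
-/

theorem Set.EqOn.iterate_of_mapsTo {α : Type*} {f g : α → α} {s : Set α} (hfg : Set.EqOn f g s)
    (hf : Set.MapsTo f s s) : ∀ n : ℕ, Set.EqOn f^[n] g^[n] s
  | 0 => fun _ _ => rfl
  | n + 1 => fun x hx => by
    rw [Function.iterate_succ_apply, Function.iterate_succ_apply, ← hfg hx]
    exact hfg.iterate_of_mapsTo hf n (hf hx)

namespace RTree

variable {V : Type*} {r : V}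

def singleton (r : V) : RTree V r where
  verts := {r}
  root_mem := mem_singleton_self r
  parent := id
  parent_mem _ hv := hv
  reaches _ hv := ⟨0, (mem_singleton.mp hv).symm ▸ rfl⟩

@[simp]
theorem card_singleton_verts : (singleton r).verts.card = 1 := Finset.card_singleton r

variable [DecidableEq V]

@[simp]
theorem treeCost_singleton (c : V → V → ℝ) : treeCost c (singleton r) = 0 := by
  simp [treeCost, singleton]

theorem treeCost_nonneg {c : V → V → ℝ} (hc : ∀ u v, 0 ≤ c u v) (T : RTree V r) :
    0 ≤ treeCost c T :=
  sum_nonneg fun _ _ => hc _ _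

def insertLeaf (T : RTree V r) {u v : V} (hu : u ∈ T.verts) (hv : v ∉ T.verts) : RTree V r :=
  have hagree : Set.EqOn (Function.update T.parent v u) T.parent T.verts :=
    fun w hw => Function.update_of_ne (by rintro rfl; exact hv hw) _ _
  { verts := insert v T.verts
    root_mem := mem_insert_of_mem T.root_mem
    parent := Function.update T.parent v u
    parent_mem := by
      intro w hw
      rcases mem_insert.mp hw with rfl | hw
      · simpa using mem_insert_of_mem hu
      · exact hagree hw ▸ mem_insert_of_mem (T.parent_mem w hw)
    reaches := by
      have hiter := hagree.symm.iterate_of_mapsTo T.parent_mem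
      intro w hw
      rcases mem_insert.mp hw with rfl | hw
      · obtain ⟨m, hm⟩ := T.reaches u hu
        exact ⟨m + 1, by rw [Function.iterate_succ_apply, Function.update_self, ← hiter m hu, hm]⟩
      · obtain ⟨m, hm⟩ := T.reaches w hw
        exact ⟨m, by rw [← hiter m hw, hm]⟩ }

theorem treeCost_insertLeaf (c : V → V → ℝ) (T : RTree V r) {u v : V} (hu : u ∈ T.verts)
    (hv : v ∉ T.verts) : treeCost c (T.insertLeaf hu hv) = treeCost c T + c u v := by
  have hvr : v ≠ r := by rintro rfl; exact hv T.root_mem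
  have hv' : v ∉ T.verts.erase r := fun h => hv (mem_of_mem_erase h)
  simp only [treeCost, insertLeaf]
  rw [erase_insert_of_ne hvr, sum_insert hv', Function.update_self, add_comm]
  congr 1
  refine sum_congr rfl fun w hw => ?_
  rw [Function.update_of_ne (by rintro rfl; exact hv' hw)]

variable {c : V → V → ℝ}

theorem exists_insert_subset_verts (hc : ∀ u v, 0 ≤ c u v) (T : RTree V r) {u : V}
    (hu : u ∈ T.verts) (v : V) :
    ∃ T' : RTree V r, insert v T.verts ⊆ T'.verts ∧ treeCost c T' ≤ treeCost c T + c u v := by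
  by_cases hv : v ∈ T.verts
  · exact ⟨T, (insert_eq_of_mem hv).subset, le_add_of_nonneg_right (hc u v)⟩
  · exact ⟨T.insertLeaf hu hv, subset_rfl, (treeCost_insertLeaf c T hu hv).le⟩

theorem exists_walk_subset_verts (hc : ∀ u v, 0 ≤ c u v) :
    ∀ (P : List V) (T : RTree V r), (∀ a ∈ P.head?, a ∈ T.verts) →
      ∃ T' : RTree V r, T.verts ∪ P.toFinset ⊆ T'.verts ∧
        treeCost c T' ≤ treeCost c T + walkCost c P
  | [], T, _ => ⟨T, by simp, by simp [walkCost]⟩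
  | [a], T, ha => ⟨T, union_subset subset_rfl (by simpa using ha), by simp [walkCost]⟩
  | a :: b :: l, T, ha => by
    obtain ⟨T₁, hT₁, hcost₁⟩ := exists_insert_subset_verts hc T (ha a rfl) b
    obtain ⟨T₂, hT₂, hcost₂⟩ := exists_walk_subset_verts hc (b :: l) T₁
      (fun _ hb => (Option.mem_some_iff.mp hb) ▸ hT₁ (mem_insert_self b _))
    refine ⟨T₂, ?_, ?_⟩
    · intro x hx
      simp only [mem_union, List.mem_toFinset, List.mem_cons] at hx
      rcases hx with hx | rfl | hx
      · exact hT₂ (mem_union_left _ (hT₁ (mem_insert_of_mem hx)))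
      · exact hT₂ (mem_union_left _ (hT₁ (mem_insert_of_mem (ha x rfl))))
      · exact hT₂ (mem_union_right _ (by simp [hx]))
    · simp only [walkCost]
      linarith

theorem exists_unionVerts_subset_verts (hc : ∀ u v, 0 ≤ c u v) :
    ∀ (𝒞 : List (List V)), (∀ P ∈ 𝒞, P.head? = some r) → ∀ T : RTree V r,
      ∃ T' : RTree V r, T.verts ∪ unionVerts 𝒞 ⊆ T'.verts ∧
        treeCost c T' ≤ treeCost c T + (𝒞.map (walkCost c)).sum
  | [], _, T => ⟨T, by simp [unionVerts], by simp⟩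
  | P :: 𝒞, hroot, T => by
    obtain ⟨T₁, hT₁, hcost₁⟩ := exists_walk_subset_verts hc P T
      (fun a ha => by
        rw [hroot P List.mem_cons_self] at ha; exact Option.mem_some_iff.mp ha ▸ T.root_mem)
    obtain ⟨T₂, hT₂, hcost₂⟩ := exists_unionVerts_subset_verts hc 𝒞
      (fun Q hQ => hroot Q (List.mem_cons_of_mem P hQ)) T₁
    refine ⟨T₂, fun x hx => ?_, ?_⟩
    · change x ∈ T.verts ∪ (P.toFinset ∪ unionVerts 𝒞) at hx
      rw [← union_assoc] at hx
      rcases mem_union.mp hx with hx | hx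
      · exact hT₂ (mem_union_left _ (hT₁ hx))
      · exact hT₂ (mem_union_right _ hx)
    · simp only [List.map_cons, List.sum_cons]
      linarith

theorem exists_bipoint_of_le_card (hc : ∀ u v, 0 ≤ c u v) (T : RTree V r) {B : ℕ} (hB1 : 1 ≤ B)
    (hBT : B ≤ T.verts.card) :
    ∃ (T₁ T₂ : RTree V r) (a b : ℝ), 0 ≤ a ∧ 0 ≤ b ∧ a + b = 1 ∧
      a * treeCost c T₁ + b * treeCost c T₂ ≤ treeCost c T ∧
      a * (T₁.verts.card : ℝ) + b * (T₂.verts.card : ℝ) = (B : ℝ) := by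
  rcases hBT.eq_or_lt with hBT | hBT
  · exact ⟨T, T, 1, 0, by simp, by simp, by simp, by simp, by simp [hBT]⟩
  have hB1 : (1 : ℝ) ≤ B := by exact_mod_cast hB1
  have hBk : (B : ℝ) < T.verts.card := by exact_mod_cast hBT
  set k : ℝ := (T.verts.card : ℝ)
  have hb0 : 0 ≤ ((B : ℝ) - 1) / (k - 1) := div_nonneg (by linarith) (by linarith)
  have hb1 : ((B : ℝ) - 1) / (k - 1) ≤ 1 := (div_le_one (by linarith)).mpr (by linarith)
  refine ⟨singleton r, T, 1 - (B - 1) / (k - 1), (B - 1) / (k - 1), by linarith, hb0, by ring,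
    ?_, ?_⟩
  · simpa using mul_le_of_le_one_left (treeCost_nonneg hc T) hb1
  · simp only [card_singleton_verts, Nat.cast_one]
    field_simp [show k - 1 ≠ 0 by linarith]
    ring

end RTree

theorem bipoint_tree_for_coverage_general
    {V : Type*} [DecidableEq V] (r : V)
    (c : V → V → ℝ) (hc : IsMetricCost c)
    (B : ℕ) (hB1 : 1 ≤ B)
    (Ostar : ℝ)
    (hO : IsLeast {y : ℝ | ∃ 𝒞 : List (List V),
        (∀ P ∈ 𝒞, P.head? = some r) ∧ B ≤ (unionVerts 𝒞).card ∧
        y = (𝒞.map (walkCost c)).sum} Ostar) :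
    ∃ (T₁ T₂ : RTree V r) (a b : ℝ), 0 ≤ a ∧ 0 ≤ b ∧ a + b = 1 ∧
      a * treeCost c T₁ + b * treeCost c T₂ ≤ Ostar ∧
      a * (T₁.verts.card : ℝ) + b * (T₂.verts.card : ℝ) = (B : ℝ) := by
  obtain ⟨⟨𝒞, hroot, hcover, rfl⟩, -⟩ := hO
  have hnonneg : ∀ u v, 0 ≤ c u v := hc.2.1
  obtain ⟨T, hspan, hcost⟩ :=
    RTree.exists_unionVerts_subset_verts hnonneg 𝒞 hroot (RTree.singleton r)
  rw [RTree.treeCost_singleton, zero_add] at hcost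
  have hBT : B ≤ T.verts.card :=
    hcover.trans (card_le_card (subset_union_right.trans hspan))
  obtain ⟨T₁, T₂, a, b, ha, hb, hab, hcost', hcard⟩ :=
    RTree.exists_bipoint_of_le_card hnonneg T hB1 hBT
  exact ⟨T₁, T₂, a, b, ha, hb, hab, hcost'.trans hcost, hcard⟩

/-- let `O*` be the minimum total cost of a finite collection of `r`-rooted
paths whose union spans at least `B` nodes.  Then there is a rooted tree or bipoint tree
`Q = a·T₁ + b·T₂` with `c(Q) ≤ O*` and `|V(Q)| = B`. -/
theorem bipoint_tree_for_coverage
    {V : Type*} [Fintype V] [DecidableEq V] (r : V)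
    (c : V → V → ℝ) (hc : IsMetricCost c)
    (B : ℕ) (hB1 : 1 ≤ B) (hBn : B ≤ Fintype.card V)
    (Ostar : ℝ)
    (hO : IsLeast {y : ℝ | ∃ 𝒞 : List (List V),
        (∀ P ∈ 𝒞, P.head? = some r) ∧ B ≤ (unionVerts 𝒞).card ∧
        y = (𝒞.map (walkCost c)).sum} Ostar) :
    ∃ (T₁ T₂ : RTree V r) (a b : ℝ), 0 ≤ a ∧ 0 ≤ b ∧ a + b = 1 ∧
      a * treeCost c T₁ + b * treeCost c T₂ ≤ Ostar ∧
      a * (T₁.verts.card : ℝ) + b * (T₂.verts.card : ℝ) = (B : ℝ) :=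
  bipoint_tree_for_coverage_general r c hc B hB1 Ostar hO
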